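/- If the unfolding f^k(x_{≤k}, x_{>k}) of a multivariate function f has an exact separated decomposition of rank r_k for each k = 1,...,d−1, i.e., f^k = ∑_{j=1}^{r_k} a_j^{(k)}(x_{≤k}) b_j^{(k)}(x_{>k}), then f admits an exact function-train decomposition with ranks bounded by (1, r₁, r₂, ..., r_{d−1}, 1). -/

import Mathlib

/-- Partial left-to-right product of function-train cores with general
coordinate spaces `X k`. -/
def ftProdD (X : ℕ → Type) (r : ℕ → ℕ)
    (F : ∀ k : ℕ, X k → Matrix (Fin (r k)) (Fin (r (k + 1))) ℝ)
    (x : ∀ k, X k) : (n : ℕ) → Matrix (Fin (r 0)) (Fin (r n)) ℝ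
  | 0 => 1
  | n + 1 => ftProdD X r F x n * F n (x n)

/-!
Let `V k` be the span of the slices `x ↦ f (y₀, …, y_{k-1}, x_k, x_{k+1}, …)` over all `y`:
the column space of the `k`-th unfolding, so `dim V k ≤ r k` whenever that unfolding has a
separated decomposition of rank `r k`. Moreover `V 0 = ℝ ∙ f`, while `V d` consists of
constants because `f` depends only on its first `d` coordinates. Fixing the `k`-th coordinate
to `a` maps `V k` into `V (k + 1)`; the core `F k a` is the matrix of this map in chosen
spanning families (a basis of `V k` for `0 < k < d`, `f` at level `0`, the constant `1` at
level `d`), and the product of the first `n` cores at `x` holds the coefficients of the slice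
at `x` of `V n`. At level `d` that slice is the constant `f x`.
-/

open Module Submodule Set

namespace FunctionTrain

variable {X : ℕ → Type} {E : Type*} [AddCommGroup E] [Module ℝ E]

def prefixComp (T : ∀ k, X k → E →ₗ[ℝ] E) (x : ∀ k, X k) : ℕ → E →ₗ[ℝ] E
  | 0 => LinearMap.id
  | n + 1 => T n (x n) ∘ₗ prefixComp T x n

section Cores

variable {m : ℕ → ℕ} {u : ∀ k, Fin (m k) → E} {T : ∀ k, X k → E →ₗ[ℝ] E} {d : ℕ}

theorem exists_cores_sum_smul_eq
    (hT : ∀ k < d, ∀ a l, T k a (u k l) ∈ span ℝ (range (u (k + 1)))) :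
    ∃ F : ∀ k, X k → Matrix (Fin (m k)) (Fin (m (k + 1))) ℝ,
      ∀ k < d, ∀ a l, ∑ j, F k a l j • u (k + 1) j = T k a (u k l) := by
  have hc : ∀ k a l, ∃ c : Fin (m (k + 1)) → ℝ,
      k < d → ∑ j, c j • u (k + 1) j = T k a (u k l) := by
    intro k a l
    by_cases hk : k < d
    · obtain ⟨c, hc⟩ := (mem_span_range_iff_exists_fun ℝ).1 (hT k hk a l)
      exact ⟨c, fun _ => hc⟩
    · exact ⟨0, fun h => absurd h hk⟩
  choose F hF using hc
  exact ⟨fun k a => Matrix.of (F k a), fun k hk a l => hF k a l hk⟩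

theorem sum_ftProdD_smul_eq {F : ∀ k, X k → Matrix (Fin (m k)) (Fin (m (k + 1))) ℝ}
    (hF : ∀ k < d, ∀ a l, ∑ j, F k a l j • u (k + 1) j = T k a (u k l))
    (x : ∀ k, X k) (i : Fin (m 0)) :
    ∀ n ≤ d, ∑ j, ftProdD X m F x n i j • u n j = prefixComp T x n (u 0 i)
  | 0, _ => by simp [ftProdD, prefixComp, Matrix.one_apply]
  | n + 1, hn => by
    have ih := sum_ftProdD_smul_eq hF x i n (by omega)
    calc ∑ j, ftProdD X m F x (n + 1) i j • u (n + 1) j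
        = ∑ l, ftProdD X m F x n i l • ∑ j, F n (x n) l j • u (n + 1) j := by
          simp only [ftProdD, Matrix.mul_apply, Finset.sum_smul, Finset.smul_sum, mul_smul]
          exact Finset.sum_comm
      _ = ∑ l, ftProdD X m F x n i l • T n (x n) (u n l) := by
          simp only [hF n (by omega)]
      _ = prefixComp T x (n + 1) (u 0 i) := by
          simp only [prefixComp, LinearMap.comp_apply, ← ih, map_sum, map_smul]

end Cores

section Span

variable {V : Submodule ℝ E} {ι : Type*} [Fintype ι] {b : ι → E}

theorem finiteDimensional_of_le_span_range (h : V ≤ span ℝ (range b)) :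
    FiniteDimensional ℝ V :=
  have := FiniteDimensional.span_of_finite ℝ (finite_range b)
  Submodule.finiteDimensional_of_le h

theorem finrank_le_card_of_le_span_range (h : V ≤ span ℝ (range b)) :
    finrank ℝ V ≤ Fintype.card ι :=
  have := FiniteDimensional.span_of_finite ℝ (finite_range b)
  (Submodule.finrank_mono h).trans (finrank_range_le_card b)

end Span

section SpanningFamilies

variable (V : ℕ → Submodule ℝ E) {d : ℕ}

theorem le_span_range_finBasis (W : Submodule ℝ E) [FiniteDimensional ℝ W] :
    W ≤ span ℝ (range fun i => (finBasis ℝ W i : E)) := by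
  intro g hg
  refine (mem_span_range_iff_exists_fun ℝ).2 ⟨(finBasis ℝ W).repr ⟨g, hg⟩, ?_⟩
  have h := congrArg Subtype.val ((finBasis ℝ W).sum_repr ⟨g, hg⟩)
  rwa [coe_sum] at h

theorem exists_spanning_families (hd : 0 < d) {e₀ e₁ : E} (he₀ : e₀ ∈ V 0) (he₁ : V d ≤ ℝ ∙ e₁)
    (hV : ∀ k, 0 < k → k < d → FiniteDimensional ℝ (V k)) :
    ∃ (m : ℕ → ℕ) (u : ∀ k, Fin (m k) → E),
      m 0 = 1 ∧ (∀ i, u 0 i = e₀) ∧ m d = 1 ∧ (∀ i, u d i = e₁) ∧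
      (∀ k, 0 < k → k < d → m k = finrank ℝ (V k)) ∧
      (∀ k < d, ∀ i, u k i ∈ V k) ∧
      ∀ k, 0 < k → k ≤ d → V k ≤ span ℝ (range (u k)) := by
  have family : ∀ k, ∃ (m : ℕ) (u : Fin m → E),
      (k = 0 → m = 1 ∧ ∀ i, u i = e₀) ∧ (k = d → m = 1 ∧ ∀ i, u i = e₁) ∧
      (0 < k → k < d → m = finrank ℝ (V k)) ∧ (k < d → ∀ i, u i ∈ V k) ∧
      (0 < k → k ≤ d → V k ≤ span ℝ (range u)) := by
    intro k
    rcases Nat.eq_zero_or_pos k with rfl | hk0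
    · exact ⟨1, fun _ => e₀, by simp, by omega, by omega, fun _ _ => he₀, by omega⟩
    rcases lt_trichotomy k d with hkd | rfl | hkd
    · have := hV k hk0 hkd
      exact ⟨_, fun i => finBasis ℝ (V k) i, by omega, by omega, fun _ _ => rfl,
        fun _ _ => Subtype.coe_prop _, fun _ _ => le_span_range_finBasis _⟩
    · exact ⟨1, fun _ => e₁, by omega, by simp, by omega, by omega,
        fun _ _ => by rwa [range_const]⟩
    · exact ⟨0, Fin.elim0, by omega, by omega, by omega, by omega, by omega⟩
  choose m u h₀ h₁ hrank hmem hspan using family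
  exact ⟨m, u, (h₀ 0 rfl).1, (h₀ 0 rfl).2, (h₁ d rfl).1, (h₁ d rfl).2,
    hrank, hmem, hspan⟩

variable {V} {T : ∀ k, X k → E →ₗ[ℝ] E}

theorem exists_ftProdD_smul_eq_prefixComp (hd : 0 < d) {e₀ e₁ : E} (he₀ : e₀ ∈ V 0)
    (he₁ : V d ≤ ℝ ∙ e₁) (hV : ∀ k, 0 < k → k < d → FiniteDimensional ℝ (V k))
    (hT : ∀ k a, MapsTo (T k a) (V k) (V (k + 1))) :
    ∃ (m : ℕ → ℕ) (F : ∀ k, X k → Matrix (Fin (m k)) (Fin (m (k + 1))) ℝ),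
      m 0 = 1 ∧ m d = 1 ∧ (∀ k, 0 < k → k < d → m k = finrank ℝ (V k)) ∧
      ∀ x (i : Fin (m 0)) (j : Fin (m d)), ftProdD X m F x d i j • e₁ = prefixComp T x d e₀ := by
  obtain ⟨m, u, hm₀, hu₀, hm₁, hu₁, hrank, hmem, hspan⟩ := exists_spanning_families V hd he₀ he₁ hV
  obtain ⟨F, hF⟩ := exists_cores_sum_smul_eq (T := T) fun k hk a l =>
    hspan (k + 1) k.succ_pos hk (hT k a (hmem k hk l))
  refine ⟨m, F, hm₀, hm₁, hrank, fun x i j => ?_⟩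
  have : Subsingleton (Fin (m d)) := by rw [hm₁]; infer_instance
  have h := sum_ftProdD_smul_eq hF x i d le_rfl
  rwa [Fintype.sum_subsingleton _ j, hu₀, hu₁] at h

end SpanningFamilies

section Slices

variable (f : (∀ i, X i) → ℝ)

def glue (k : ℕ) (y x : ∀ i, X i) : ∀ i, X i := (Iio k).piecewise y x

def slice (k : ℕ) (y : ∀ i, X i) : (∀ i, X i) → ℝ := fun x => f (glue k y x)

def sliceSpan (k : ℕ) : Submodule ℝ ((∀ i, X i) → ℝ) := span ℝ (range (slice f k))

def fixCoord (k : ℕ) (a : X k) : ((∀ i, X i) → ℝ) →ₗ[ℝ] ((∀ i, X i) → ℝ) :=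
  LinearMap.funLeft ℝ ℝ (Function.update · k a)

theorem glue_update (k : ℕ) (a : X k) (y x : ∀ i, X i) :
    glue k y (Function.update x k a) = glue (k + 1) (Function.update y k a) x := by
  funext i
  rcases lt_trichotomy i k with h | rfl | h
  · simp [glue, h, h.ne, Nat.lt_succ_of_lt h]
  · simp [glue]
  · simp [glue, h.ne', show ¬i < k by omega, show ¬i < k + 1 by omega]

theorem slice_zero (y : ∀ i, X i) : slice f 0 y = f :=
  funext fun _ => congrArg f <| funext fun i => by simp [glue]

theorem slice_self_apply (k : ℕ) (x : ∀ i, X i) : slice f k x x = f x := by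
  simp [slice, glue]

theorem fixCoord_slice (k : ℕ) (a : X k) (y : ∀ i, X i) :
    fixCoord k a (slice f k y) = slice f (k + 1) (Function.update y k a) := by
  funext x
  simp [fixCoord, slice, glue_update]

theorem prefixComp_fixCoord_apply (x : ∀ k, X k) :
    ∀ n, prefixComp fixCoord x n f = slice f n x
  | 0 => (slice_zero f x).symm
  | n + 1 => by
    rw [prefixComp, LinearMap.comp_apply, prefixComp_fixCoord_apply x n, fixCoord_slice,
      Function.update_eq_self]

theorem mem_sliceSpan_zero : f ∈ sliceSpan f 0 := by
  rcases isEmpty_or_nonempty (∀ i, X i) with h | ⟨⟨y⟩⟩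
  · rw [Subsingleton.elim f 0]
    exact zero_mem _
  · exact subset_span ⟨y, slice_zero f y⟩

theorem mapsTo_fixCoord_sliceSpan (k : ℕ) (a : X k) :
    MapsTo (fixCoord k a) (sliceSpan f k) (sliceSpan f (k + 1)) := by
  have h : sliceSpan f k ≤ (sliceSpan f (k + 1)).comap (fixCoord k a) :=
    span_le.2 (range_subset_iff.2 fun y => subset_span ⟨_, (fixCoord_slice f k a y).symm⟩)
  exact fun _ hg => h hg

theorem sliceSpan_le_span_of_separated {k : ℕ} {ι : Type*} [Fintype ι]
    {a b : ι → (∀ i, X i) → ℝ}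
    (ha : ∀ j x y, (∀ i, i < k → x i = y i) → a j x = a j y)
    (hb : ∀ j x y, (∀ i, k ≤ i → x i = y i) → b j x = b j y)
    (hf : ∀ x, f x = ∑ j, a j x * b j x) :
    sliceSpan f k ≤ span ℝ (range b) := by
  refine span_le.2 (range_subset_iff.2 fun y => ?_)
  have hy : slice f k y = ∑ j, a j y • b j := by
    funext x
    simp only [slice, hf, Finset.sum_apply, Pi.smul_apply, smul_eq_mul]
    refine Finset.sum_congr rfl fun j _ => ?_
    rw [ha j _ y fun i hi => by simp [glue, hi], hb j _ x fun i hi => by simp [glue, not_lt.2 hi]]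
  rw [hy]
  exact sum_mem fun j _ => smul_mem _ _ (subset_span ⟨j, rfl⟩)

theorem sliceSpan_le_span_one {d : ℕ} (hdep : ∀ x y, (∀ i, i < d → x i = y i) → f x = f y) :
    sliceSpan f d ≤ ℝ ∙ 1 := by
  refine span_le.2 (range_subset_iff.2 fun y => mem_span_singleton.2 ⟨f y, ?_⟩)
  funext x
  simp [slice, hdep (glue d y x) y fun i hi => by simp [glue, hi]]

end Slices

end FunctionTrain

open FunctionTrain

/-- If every unfolding `f^k` of `f` (as a function of the first `k`
coordinates versus the rest) has an exact separated decomposition of rank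
`r k`, then `f` admits an exact function-train decomposition with ranks
bounded by `(1, r₁, …, r_{d−1}, 1)`. -/
theorem ft_exists_of_unfolding_ranks (d : ℕ) (hd : 1 ≤ d)
    (X : ℕ → Type) (f : (∀ k, X k) → ℝ) (r : ℕ → ℕ)
    (hunf : ∀ k, 0 < k → k < d →
      ∃ (a : Fin (r k) → (∀ i, X i) → ℝ) (b : Fin (r k) → (∀ i, X i) → ℝ),
        (∀ j x y, (∀ i, i < k → x i = y i) → a j x = a j y) ∧
        (∀ j x y, (∀ i, k ≤ i → x i = y i) → b j x = b j y) ∧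
        (∀ x, f x = ∑ j, a j x * b j x))
    (hdep : ∀ x y, (∀ i, i < d → x i = y i) → f x = f y) :
    ∃ (r' : ℕ → ℕ) (F : ∀ k : ℕ, X k → Matrix (Fin (r' k)) (Fin (r' (k + 1))) ℝ),
      r' 0 = 1 ∧ r' d = 1 ∧
      (∀ k, 0 < k → k < d → r' k ≤ r k) ∧
      (∀ (x : ∀ k, X k) (i : Fin (r' 0)) (j : Fin (r' d)),
        ftProdD X r' F x d i j = f x) := by
  have hsep : ∀ k, 0 < k → k < d →
      ∃ b : Fin (r k) → (∀ i, X i) → ℝ, sliceSpan f k ≤ span ℝ (range b) := by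
    intro k hk hkd
    obtain ⟨a, b, ha, hb, hf⟩ := hunf k hk hkd
    exact ⟨b, sliceSpan_le_span_of_separated f ha hb hf⟩
  have hfin : ∀ k, 0 < k → k < d → FiniteDimensional ℝ (sliceSpan f k) := fun k hk hkd =>
    finiteDimensional_of_le_span_range (hsep k hk hkd).choose_spec
  obtain ⟨m, F, hm₀, hm₁, hrank, hF⟩ := exists_ftProdD_smul_eq_prefixComp hd
    (mem_sliceSpan_zero f) (sliceSpan_le_span_one f hdep) hfin (mapsTo_fixCoord_sliceSpan f)
  refine ⟨m, F, hm₀, hm₁, fun k hk hkd => ?_, fun x i j => ?_⟩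
  · rw [hrank k hk hkd, ← Fintype.card_fin (r k)]
    exact finrank_le_card_of_le_span_range (hsep k hk hkd).choose_spec
  · simpa [prefixComp_fixCoord_apply, slice_self_apply] using congrFun (hF x i j) x
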